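/- Let H = ⟨ω^d, ω^e·α^s⟩ be a subgroup of ΓL_1(p^r) in standard form, i.e., s > 0, s | r, d > 0, d | p^r − 1, 0 ≤ e < d, and d divides e·(p^r − 1)/(p^s − 1). Then the order of H equals (p^r − 1)·r/(d·s). -/

import Mathlib

/-!
Write `a` for multiplication by `ω` and `b` for the Frobenius, so that `b a = a ^ p b` and
`⟨a⟩ ∩ ⟨b⟩ = 1` (a ring automorphism fixes `1`, a multiplication does not unless trivial).
Then `A = a ^ e b ^ s` normalises `⟨a ^ d⟩`, so every element of `H` is `a ^ (d j) A ^ t`, and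
`A ^ t = a ^ (e (1 + p ^ s + ⋯ + p ^ (s (t - 1)))) b ^ (s t)`. The divisibility hypothesis says
exactly that `A ^ (r / s) ∈ ⟨a ^ d⟩`, so `j < (p ^ r - 1) / d` and `t < r / s` suffice, and
distinct such pairs give distinct elements because `⟨a⟩ ∩ ⟨b⟩ = 1`.
-/

open Finset Subgroup

section Metacyclic

variable {G : Type*} [Group G]

theorem SemiconjBy.pow_pow_of_eq_pow {a b : G} {p : ℕ} (h : SemiconjBy b a (a ^ p)) (t m : ℕ) :
    SemiconjBy (b ^ t) (a ^ m) (a ^ (m * p ^ t)) := by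
  induction t with
  | zero => simp
  | succ t ih =>
    rw [pow_succ', show m * p ^ (t + 1) = p * (m * p ^ t) by ring, pow_mul]
    exact (h.pow_right _).mul_left ih

theorem coe_closure_pair_of_semiconjBy [Finite G] {c y : G} {m : ℕ} (h : SemiconjBy y c (c ^ m)) :
    (closure {c, y} : Set G) = Set.range fun jt : ℕ × ℕ => c ^ jt.1 * y ^ jt.2 := by
  let S : Submonoid G :=
    { carrier := Set.range fun jt : ℕ × ℕ => c ^ jt.1 * y ^ jt.2
      one_mem' := ⟨(0, 0), by simp⟩
      mul_mem' := by
        rintro _ _ ⟨⟨j, t⟩, rfl⟩ ⟨⟨j', t'⟩, rfl⟩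
        refine ⟨(j + j' * m ^ t, t + t'), ?_⟩
        simp only [pow_add, mul_assoc]
        rw [← mul_assoc (y ^ t), (h.pow_pow_of_eq_pow t j').eq, mul_assoc] }
  have hS : Submonoid.closure {c, y} = S := by
    refine Submonoid.closure_eq_of_le ?_ ?_
    · rintro _ (rfl | rfl)
      exacts [⟨(1, 0), by simp⟩, ⟨(0, 1), by simp⟩]
    · rintro _ ⟨⟨j, t⟩, rfl⟩
      exact mul_mem (pow_mem (Submonoid.subset_closure (by simp)) j)
        (pow_mem (Submonoid.subset_closure (by simp)) t)
  rw [← Subgroup.coe_toSubmonoid, closure_toSubmonoid_of_finite, hS]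
  rfl

theorem range_pow_mul_pow_eq_range_fin [Finite G] {c y : G} {k w : ℕ} (hk : 0 < k)
    (hy : y ^ k = c ^ w) :
    (Set.range fun jt : ℕ × ℕ => c ^ jt.1 * y ^ jt.2) =
      Set.range fun jt : Fin (orderOf c) × Fin k => c ^ (jt.1 : ℕ) * y ^ (jt.2 : ℕ) := by
  refine subset_antisymm ?_ fun _ ⟨⟨j, t⟩, hjt⟩ ↦ ⟨(j, t), hjt⟩
  rintro _ ⟨⟨j, t⟩, rfl⟩
  refine ⟨(⟨(j + w * (t / k)) % orderOf c, Nat.mod_lt _ (orderOf_pos c)⟩,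
    ⟨t % k, Nat.mod_lt _ hk⟩), ?_⟩
  dsimp only
  conv_rhs => rw [← Nat.div_add_mod t k]
  rw [pow_mod_orderOf, pow_add, pow_add, pow_mul y, hy, pow_mul, mul_assoc]

variable {a b : G}

theorem SemiconjBy.pow_mul_pow_pow {p : ℕ} (hba : SemiconjBy b a (a ^ p)) (e s t : ℕ) :
    (a ^ e * b ^ s) ^ t = a ^ (e * ∑ i ∈ range t, p ^ (s * i)) * b ^ (s * t) := by
  induction t with
  | zero => simp
  | succ t ih =>
    rw [pow_succ, ih, sum_range_succ, mul_add, pow_add, mul_add, mul_one, pow_add, mul_assoc,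
      ← mul_assoc (b ^ (s * t)), (hba.pow_pow_of_eq_pow (s * t) e).eq, pow_mul p s t]
    simp only [mul_assoc]

theorem eq_of_pow_mul_pow_eq_of_disjoint (hab : Disjoint (zpowers a) (zpowers b))
    {m m' t t' : ℕ} (h : a ^ m * b ^ t = a ^ m' * b ^ t') :
    a ^ m = a ^ m' ∧ b ^ t = b ^ t' := by
  simpa using mul_injective_of_disjoint hab
    (a₁ := (⟨a ^ m, npow_mem_zpowers a m⟩, ⟨b ^ t, npow_mem_zpowers b t⟩))
    (a₂ := (⟨a ^ m', npow_mem_zpowers a m'⟩, ⟨b ^ t', npow_mem_zpowers b t'⟩)) h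

theorem card_closure_pow_pow_mul_pow [Finite G] {p : ℕ} (hba : SemiconjBy b a (a ^ p))
    (hab : Disjoint (zpowers a) (zpowers b)) {d e s : ℕ} (hd : d ∣ orderOf a)
    (hs : s ∣ orderOf b) (hdiv : d ∣ e * ∑ i ∈ range (orderOf b / s), p ^ (s * i)) :
    Nat.card (closure {a ^ d, a ^ e * b ^ s}) = orderOf a / d * (orderOf b / s) := by
  have hd0 : d ≠ 0 := by rintro rfl; exact (orderOf_pos a).ne' (zero_dvd_iff.mp hd)
  have hs0 : 0 < s := Nat.pos_of_ne_zero <| by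
    rintro rfl; exact (orderOf_pos b).ne' (zero_dvd_iff.mp hs)
  have hk : 0 < orderOf b / s := Nat.div_pos (Nat.le_of_dvd (orderOf_pos b) hs) hs0
  have hsk : s * (orderOf b / s) = orderOf b := Nat.mul_div_cancel' hs
  have hsemi : SemiconjBy (a ^ e * b ^ s) (a ^ d) ((a ^ d) ^ p ^ s) := by
    rw [← pow_mul]
    exact (Commute.pow_pow_self a e _).semiconjBy.mul_left (hba.pow_pow_of_eq_pow s d)
  obtain ⟨w, hw⟩ := hdiv
  have hAk : (a ^ e * b ^ s) ^ (orderOf b / s) = (a ^ d) ^ w := by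
    rw [hba.pow_mul_pow_pow, hsk, pow_orderOf_eq_one, mul_one, hw, pow_mul]
  have hinj : Function.Injective fun jt : Fin (orderOf (a ^ d)) × Fin (orderOf b / s) ↦
      (a ^ d) ^ (jt.1 : ℕ) * (a ^ e * b ^ s) ^ (jt.2 : ℕ) := by
    rintro ⟨j, t⟩ ⟨j', t'⟩ h
    simp only [hba.pow_mul_pow_pow, ← mul_assoc, ← pow_mul, ← pow_add] at h
    obtain ⟨ha, hb⟩ := eq_of_pow_mul_pow_eq_of_disjoint hab h
    have hst (u : Fin (orderOf b / s)) : s * u < orderOf b :=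
      ((Nat.mul_lt_mul_left hs0).mpr u.2).trans_eq hsk
    obtain rfl : t = t' :=
      Fin.ext (Nat.eq_of_mul_eq_mul_left hs0 (pow_injOn_Iio_orderOf (hst t) (hst t') hb))
    rw [pow_add, pow_add, mul_left_inj, pow_mul, pow_mul] at ha
    rw [Fin.ext (pow_injOn_Iio_orderOf j.2 j'.2 ha)]
  rw [← SetLike.coe_sort_coe, coe_closure_pair_of_semiconjBy hsemi,
    range_pow_mul_pow_eq_range_fin hk hAk, Nat.card_range_of_injective hinj, Nat.card_prod,
    Nat.card_fin, Nat.card_fin, orderOf_pow_of_dvd hd0 hd]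

end Metacyclic

section GroupWithZero

variable {G₀ : Type*} [GroupWithZero G₀]

theorem Equiv.mulLeft₀_eq_toPermHom (a : G₀) (ha : a ≠ 0) :
    Equiv.mulLeft₀ a ha = MulAction.toPermHom G₀ˣ G₀ (Units.mk0 a ha) :=
  rfl

theorem Equiv.mulLeft₀_pow_apply (a : G₀) (ha : a ≠ 0) (m : ℕ) (x : G₀) :
    (Equiv.mulLeft₀ a ha ^ m) x = a ^ m * x := by
  rw [mulLeft₀_eq_toPermHom, ← map_pow]
  simp [Units.smul_def]

theorem Equiv.orderOf_mulLeft₀ (a : G₀) (ha : a ≠ 0) :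
    orderOf (Equiv.mulLeft₀ a ha) = orderOf a := by
  rw [mulLeft₀_eq_toPermHom, orderOf_injective _ MulAction.toPerm_injective, ← orderOf_units,
    Units.val_mk0]

theorem orderOf_eq_card_sub_one_of_forall_pow_eq [Finite G₀] {a : G₀} (ha : a ≠ 0)
    (h : ∀ y : G₀, y ≠ 0 → ∃ n : ℕ, a ^ n = y) :
    orderOf a = Nat.card G₀ - 1 := by
  rw [← Nat.card_units, ← Units.val_mk0 ha, orderOf_units]
  refine orderOf_eq_card_of_forall_mem_zpowers fun v ↦ ?_
  obtain ⟨n, hn⟩ := h v v.ne_zero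
  exact ⟨n, Units.ext (by simpa using hn)⟩

end GroupWithZero

section FiniteField

theorem disjoint_range_toPermHom_units_range_toPerm (R : Type*) [Semiring R] :
    Disjoint (MulAction.toPermHom Rˣ R).range (RingAut.toPerm R).range := by
  rw [disjoint_iff_inf_le]
  rintro _ ⟨⟨u, rfl⟩, g, hg⟩
  have hu1 := DFunLike.congr_fun hg 1
  simp only [MulAction.toPermHom_apply, MulAction.toPerm_apply, Units.smul_def] at hu1
  have hu : u = 1 := Units.ext (by simpa using hu1.symm.trans (map_one g))
  rw [Subgroup.mem_bot, hu, map_one]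

variable {K : Type*} [Field K] {p : ℕ} [Fact p.Prime] [CharP K p]

theorem semiconjBy_frobeniusEquiv_mulLeft₀ [PerfectRing K p] (ω : K) (hω0 : ω ≠ 0) :
    SemiconjBy (frobeniusEquiv K p).toEquiv (Equiv.mulLeft₀ ω hω0)
      (Equiv.mulLeft₀ ω hω0 ^ p) :=
  Equiv.ext fun x ↦ by simp [Equiv.mulLeft₀_pow_apply, frobenius_def, mul_pow]

theorem orderOf_frobeniusEquiv_toEquiv [Finite K] {r : ℕ} (h : Nat.card K = p ^ r) :
    orderOf (frobeniusEquiv K p).toEquiv = r := by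
  let := ZMod.algebra K p
  have hφ : (frobeniusEquiv K p).toEquiv = MulAction.toPermHom (K ≃ₐ[ZMod p] K) K
      (FiniteField.frobeniusAlgEquivOfAlgebraic (ZMod p) K) :=
    Equiv.ext fun x ↦ by simp [ZMod.card, frobenius_def]
  rw [hφ, orderOf_injective _ MulAction.toPerm_injective,
    FiniteField.orderOf_frobeniusAlgEquivOfAlgebraic]
  refine Nat.pow_right_injective (Fact.out : p.Prime).two_le (show p ^ _ = p ^ r from ?_)
  rw [← h, Module.natCard_eq_pow_finrank (K := ZMod p), Nat.card_zmod]

end FiniteField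

theorem stmt_18_general (p r d e s : ℕ) [Fact p.Prime] (hr : 0 < r)
    (ω : GaloisField p r) (hω0 : ω ≠ 0)
    (hω : ∀ y : GaloisField p r, y ≠ 0 → ∃ n : ℕ, ω ^ n = y)
    (hs : 0 < s) (hsr : s ∣ r) (hdq : d ∣ p ^ r - 1)
    (hdiv : d ∣ e * ((p ^ r - 1) / (p ^ s - 1))) :
    let σω : Equiv.Perm (GaloisField p r) := Equiv.mulLeft₀ ω hω0
    let σα : Equiv.Perm (GaloisField p r) := (frobeniusEquiv (GaloisField p r) p).toEquiv
    let H : Subgroup (Equiv.Perm (GaloisField p r)) :=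
      Subgroup.closure {σω ^ d, σω ^ e * σα ^ s}
    Nat.card H = (p ^ r - 1) * r / (d * s) := by
  intro σω σα H
  have hcard : Nat.card (GaloisField p r) = p ^ r := GaloisField.card p r hr.ne'
  have hordω : orderOf σω = p ^ r - 1 := by
    rw [Equiv.orderOf_mulLeft₀, orderOf_eq_card_sub_one_of_forall_pow_eq hω0 hω, hcard]
  have hordα : orderOf σα = r := orderOf_frobeniusEquiv_toEquiv hcard
  have hdisj : Disjoint (zpowers σω) (zpowers σα) :=
    (disjoint_range_toPermHom_units_range_toPerm _).mono
      (zpowers_le.mpr (MonoidHom.mem_range.mpr ⟨_, rfl⟩))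
      (zpowers_le.mpr (MonoidHom.mem_range.mpr ⟨frobeniusEquiv _ p, rfl⟩))
  have hgeom : ∑ i ∈ range (r / s), p ^ (s * i) = (p ^ r - 1) / (p ^ s - 1) := by
    simp_rw [pow_mul]
    rw [Nat.geomSum_eq (Nat.one_lt_pow hs.ne' (Fact.out : p.Prime).one_lt), ← pow_mul,
      Nat.mul_div_cancel' hsr]
  rw [card_closure_pow_pow_mul_pow (semiconjBy_frobeniusEquiv_mulLeft₀ ω hω0) hdisj
    (by rwa [hordω]) (by rwa [hordα]) (by rwa [hordα, hgeom]), hordω, hordα,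
    Nat.div_mul_div_comm hdq hsr]

theorem stmt_18 (p r d e s : ℕ) [Fact p.Prime] (hr : 0 < r)
    (ω : GaloisField p r) (hω0 : ω ≠ 0)
    (hω : ∀ y : GaloisField p r, y ≠ 0 → ∃ n : ℕ, ω ^ n = y)
    (hs : 0 < s) (hsr : s ∣ r) (hd : 0 < d) (hdq : d ∣ p ^ r - 1)
    (hed : e < d) (hdiv : d ∣ e * ((p ^ r - 1) / (p ^ s - 1))) :
    let σω : Equiv.Perm (GaloisField p r) := Equiv.mulLeft₀ ω hω0
    let σα : Equiv.Perm (GaloisField p r) := (frobeniusEquiv (GaloisField p r) p).toEquiv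
    let H : Subgroup (Equiv.Perm (GaloisField p r)) :=
      Subgroup.closure {σω ^ d, σω ^ e * σα ^ s}
    Nat.card H = (p ^ r - 1) * r / (d * s) :=
  stmt_18_general p r d e s hr ω hω0 hω hs hsr hdq hdiv
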